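/- The mean-adjusted all-in-one rule A_ma, defined by A_ma^X = (S^X − E[S^X] + E[X₁], E[X₂], …, E[Xₙ]) for X ∈ 𝒳ⁿ, is a risk sharing rule on 𝒳 = L¹(Ω, 𝓕, ℙ) satisfying Axioms AF, RA and OA; if moreover there exists a non-constant integrable random variable on (Ω, 𝓕, ℙ), then A_ma does not satisfy Axiom RF. -/

import Mathlib

/-!
Up to a.e. equality, agent `i₀` of the mean-adjusted all-in-one rule receives `S^X` minus a
constant and every other agent `k` the constant `E[X_k]`. So each allocation is a function of
`S^X` (RA) with the right mean (AF), depends on `X` only through `S^X` and `X_k` (OA), and the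
constants cancel in the total because `E` is additive. For RF, hand a non-constant `Z` to another
agent and nothing to `i₀`: agent `i₀` then bears `Z - E[Z]`, and RF would force `Z ≤ E[Z]` a.s.,
hence `Z = E[Z]` a.s.
-/

open MeasureTheory

noncomputable section

/-- The σ-field generated by (the canonical strongly measurable representative of)
an L¹ random variable. -/
def sigmaGen {Ω : Type*} [MeasurableSpace Ω] {μ : MeasureTheory.Measure Ω}
    (f : MeasureTheory.Lp ℝ 1 μ) : MeasurableSpace Ω :=
  MeasurableSpace.comap (f : Ω → ℝ) inferInstance

theorem Fintype.sum_update_update_add_zero {ι M : Type*} [Fintype ι] [DecidableEq ι]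
    [AddCommMonoid M] (f : ι → M) {i j : ι} (hij : i ≠ j) :
    ∑ k, Function.update (Function.update f i (f i + f j)) j 0 k = ∑ k, f k := by
  have hj : j ∈ Finset.univ.erase i := Finset.mem_erase.2 ⟨hij.symm, Finset.mem_univ j⟩
  rw [← Finset.add_sum_erase _ _ (Finset.mem_univ i), ← Finset.add_sum_erase _ _ hj,
    ← Finset.add_sum_erase _ f (Finset.mem_univ i), ← Finset.add_sum_erase _ f hj]
  simp only [Function.update_self, Function.update_of_ne hij, zero_add, add_assoc]
  congr 2
  refine Finset.sum_congr rfl fun k hk => ?_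
  obtain ⟨hkj, hki⟩ := Finset.mem_erase.1 hk
  rw [Function.update_of_ne hkj, Function.update_of_ne (Finset.ne_of_mem_erase hki)]

namespace MeasureTheory

theorem L1.integral_finset_sum {α ι : Type*} [MeasurableSpace α] {μ : Measure α}
    (s : Finset ι) (f : ι → Lp ℝ 1 μ) :
    ∫ a, ((∑ i ∈ s, f i : Lp ℝ 1 μ) : α → ℝ) a ∂μ = ∑ i ∈ s, ∫ a, (f i : α → ℝ) a ∂μ := by
  simp only [← L1.integral_eq_integral, L1.integral_eq, map_sum]

theorem ae_eq_integral_of_ae_le_integral {α : Type*} [MeasurableSpace α] {μ : Measure α}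
    [IsProbabilityMeasure μ] {f : α → ℝ} (hf : Integrable f μ)
    (hle : ∀ᵐ a ∂μ, f a ≤ ∫ a, f a ∂μ) : f =ᵐ[μ] fun _ => ∫ a, f a ∂μ :=
  (integral_eq_iff_of_ae_le hf (integrable_const _) hle).1 (by simp)

end MeasureTheory

section MeanAdjustedAllInOne

variable {Ω ι : Type*} [MeasurableSpace Ω] {μ : Measure Ω} [Fintype ι]

structure IsMeanAdjustedAllInOne (A : (ι → Lp ℝ 1 μ) → ι → Lp ℝ 1 μ) (i₀ : ι) : Prop where
  apply_self_ae : ∀ X, (A X i₀ : Ω → ℝ) =ᵐ[μ]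
    fun ω => ((∑ j, X j : Lp ℝ 1 μ) : Ω → ℝ) ω
      - (∫ ω', ((∑ j, X j : Lp ℝ 1 μ) : Ω → ℝ) ω' ∂μ) + ∫ ω', (X i₀ : Ω → ℝ) ω' ∂μ
  apply_of_ne_ae : ∀ X i, i ≠ i₀ → (A X i : Ω → ℝ) =ᵐ[μ] fun _ => ∫ ω', (X i : Ω → ℝ) ω' ∂μ

namespace IsMeanAdjustedAllInOne

variable {A : (ι → Lp ℝ 1 μ) → ι → Lp ℝ 1 μ} {i₀ : ι}

theorem apply_self [IsFiniteMeasure μ] (hA : IsMeanAdjustedAllInOne A i₀)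
    (X : ι → Lp ℝ 1 μ) :
    A X i₀ = ∑ j, X j - Lp.const 1 μ (∫ ω, ((∑ j, X j : Lp ℝ 1 μ) : Ω → ℝ) ω ∂μ)
      + Lp.const 1 μ (∫ ω, (X i₀ : Ω → ℝ) ω ∂μ) := by
  set S : Lp ℝ 1 μ := ∑ j, X j
  set c : ℝ := ∫ ω, (S : Ω → ℝ) ω ∂μ
  set c₀ : ℝ := ∫ ω, (X i₀ : Ω → ℝ) ω ∂μ
  apply Lp.ext
  filter_upwards [hA.apply_self_ae X, Lp.coeFn_add (S - Lp.const 1 μ c) (Lp.const 1 μ c₀),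
    Lp.coeFn_sub S (Lp.const 1 μ c), Lp.coeFn_const 1 μ c, Lp.coeFn_const 1 μ c₀]
    with ω h h₁ h₂ h₃ h₄
  rw [h, h₁, Pi.add_apply, h₂, Pi.sub_apply, h₃, h₄, Function.const_apply, Function.const_apply]

theorem apply_of_ne [IsFiniteMeasure μ] (hA : IsMeanAdjustedAllInOne A i₀)
    (X : ι → Lp ℝ 1 μ) {i : ι} (hi : i ≠ i₀) :
    A X i = Lp.const 1 μ (∫ ω, (X i : Ω → ℝ) ω ∂μ) :=
  Lp.ext <| (hA.apply_of_ne_ae X i hi).trans (Lp.coeFn_const 1 μ _).symm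

theorem sum_apply [IsFiniteMeasure μ] (hA : IsMeanAdjustedAllInOne A i₀) (X : ι → Lp ℝ 1 μ) :
    ∑ i, A X i = ∑ i, X i := by
  classical
  rw [← Finset.add_sum_erase _ _ (Finset.mem_univ i₀),
    Finset.sum_congr rfl fun i hi => hA.apply_of_ne X (Finset.ne_of_mem_erase hi),
    hA.apply_self, L1.integral_finset_sum,
    ← Finset.add_sum_erase _ (fun j => ∫ ω, (X j : Ω → ℝ) ω ∂μ) (Finset.mem_univ i₀),
    map_add, map_sum]
  abel

theorem integral_apply [IsProbabilityMeasure μ] (hA : IsMeanAdjustedAllInOne A i₀)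
    (X : ι → Lp ℝ 1 μ) (i : ι) :
    ∫ ω, (A X i : Ω → ℝ) ω ∂μ = ∫ ω, (X i : Ω → ℝ) ω ∂μ := by
  by_cases hi : i = i₀
  · subst hi
    have hS := L1.integrable_coeFn (∑ j, X j)
    rw [integral_congr_ae (hA.apply_self_ae X),
      integral_add (f := fun ω => _ - _) (hS.sub (integrable_const _)) (integrable_const _),
      integral_sub hS (integrable_const _)]
    simp
  · simp [integral_congr_ae (hA.apply_of_ne_ae X i hi)]

theorem aestronglyMeasurable_apply (hA : IsMeanAdjustedAllInOne A i₀) (X : ι → Lp ℝ 1 μ)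
    (i : ι) : AEStronglyMeasurable[sigmaGen (∑ j, X j)] (A X i : Ω → ℝ) μ := by
  by_cases hi : i = i₀
  · subst hi
    have hS : Measurable[sigmaGen (∑ j, X j)] ((∑ j, X j : Lp ℝ 1 μ) : Ω → ℝ) :=
      measurable_iff_comap_le.2 le_rfl
    exact ⟨_, ((hS.sub measurable_const).add measurable_const).stronglyMeasurable,
      hA.apply_self_ae X⟩
  · exact ⟨_, stronglyMeasurable_const, hA.apply_of_ne_ae X i hi⟩

theorem apply_eq_of_sum_eq [IsFiniteMeasure μ] (hA : IsMeanAdjustedAllInOne A i₀)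
    {X Y : ι → Lp ℝ 1 μ} (hsum : ∑ j, Y j = ∑ j, X j) {k : ι} (hk : Y k = X k) :
    A Y k = A X k := by
  by_cases hk₀ : k = i₀
  · subst hk₀
    rw [hA.apply_self, hA.apply_self, hsum, hk]
  · rw [hA.apply_of_ne Y hk₀, hA.apply_of_ne X hk₀, hk]

theorem apply_update_update [IsFiniteMeasure μ] [DecidableEq ι]
    (hA : IsMeanAdjustedAllInOne A i₀) (X : ι → Lp ℝ 1 μ) {i j k : ι} (hij : i ≠ j)
    (hki : k ≠ i) (hkj : k ≠ j) :
    A (Function.update (Function.update X i (X i + X j)) j 0) k = A X k :=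
  hA.apply_eq_of_sum_eq (Fintype.sum_update_update_add_zero X hij)
    (by rw [Function.update_of_ne hkj, Function.update_of_ne hki])

theorem not_ae_apply_single_le_essSup [IsProbabilityMeasure μ] [DecidableEq ι]
    (hA : IsMeanAdjustedAllInOne A i₀) {i₁ : ι} (hi₁ : i₁ ≠ i₀) {Z : Lp ℝ 1 μ}
    (hZ : ∀ c : ℝ, ¬ (Z : Ω → ℝ) =ᵐ[μ] fun _ => c) :
    ¬ ∀ᵐ ω ∂μ, ((A (Pi.single i₁ Z) i₀ : Ω → ℝ) ω : EReal)
      ≤ essSup (fun ω' => (((Pi.single i₁ Z : ι → Lp ℝ 1 μ) i₀ : Lp ℝ 1 μ) ω' : EReal)) μ := by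
  have hX₀ : (Pi.single i₁ Z : ι → Lp ℝ 1 μ) i₀ = 0 := by simp [hi₁.symm]
  have hess : essSup (fun ω' => (((0 : Lp ℝ 1 μ) : Ω → ℝ) ω' : EReal)) μ = 0 := by
    simp
  intro hle
  rw [hX₀, hess] at hle
  refine hZ _ (ae_eq_integral_of_ae_le_integral (L1.integrable_coeFn Z) ?_)
  filter_upwards [hle, hA.apply_self_ae (Pi.single i₁ Z)] with ω hω hAω
  rw [hAω, Fintype.sum_pi_single', hX₀] at hω
  simpa using EReal.coe_nonpos.1 hω

end IsMeanAdjustedAllInOne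

end MeanAdjustedAllInOne

/-- the mean-adjusted all-in-one rule
A_ma^X = (S^X − E[S^X] + E[X₁], E[X₂], …, E[Xₙ]) is a risk sharing rule satisfying
Axioms AF, RA and OA; and if some non-constant integrable random variable exists,
it does not satisfy Axiom RF.  (Any map whose components are a.s. equal to the defining
formulas is such a rule.) -/
theorem mean_adjusted_all_in_one_rule
    {Ω : Type*} [MeasurableSpace Ω] {μ : Measure Ω} [IsProbabilityMeasure μ]
    {n : ℕ} (hn : 3 ≤ n)
    (A : (Fin n → Lp ℝ 1 μ) → (Fin n → Lp ℝ 1 μ))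
    -- A is the mean-adjusted all-in-one rule (the first agent is indexed by ⟨0, _⟩)
    (hspec₁ : ∀ X, (A X (⟨0, by omega⟩ : Fin n) : Ω → ℝ) =ᵐ[μ]
        fun ω => ((∑ j, X j : Lp ℝ 1 μ) : Ω → ℝ) ω
          - (∫ ω', ((∑ j, X j : Lp ℝ 1 μ) : Ω → ℝ) ω' ∂μ)
          + ∫ ω', (X (⟨0, by omega⟩ : Fin n) : Ω → ℝ) ω' ∂μ)
    (hspec₂ : ∀ X (i : Fin n), i ≠ (⟨0, by omega⟩ : Fin n) →
        (A X i : Ω → ℝ) =ᵐ[μ] fun _ => ∫ ω', (X i : Ω → ℝ) ω' ∂μ) :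
    -- A is a risk sharing rule
    (∀ X, ∑ i, A X i = ∑ i, X i) ∧
    -- Axiom AF
    (∀ X (i : Fin n), ∫ ω, (A X i : Ω → ℝ) ω ∂μ = ∫ ω, (X i : Ω → ℝ) ω ∂μ) ∧
    -- Axiom RA
    (∀ X (i : Fin n), AEStronglyMeasurable[sigmaGen (∑ j, X j)] (A X i : Ω → ℝ) μ) ∧
    -- Axiom OA
    (∀ X (i j : Fin n), i ≠ j → ∀ k, k ≠ i → k ≠ j →
        A (Function.update (Function.update X i (X i + X j)) j 0) k = A X k) ∧
    -- if a non-constant integrable random variable exists, Axiom RF fails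
    ((∃ Z : Lp ℝ 1 μ, ∀ c : ℝ, ¬((Z : Ω → ℝ) =ᵐ[μ] fun _ => c)) →
      ¬ (∀ X (i : Fin n), ∀ᵐ ω ∂μ, ((A X i : Ω → ℝ) ω : EReal)
          ≤ essSup (fun ω' => ((X i : Ω → ℝ) ω' : EReal)) μ)) := by
  have hA : IsMeanAdjustedAllInOne A (⟨0, by omega⟩ : Fin n) := ⟨hspec₁, hspec₂⟩
  refine ⟨hA.sum_apply, hA.integral_apply, hA.aestronglyMeasurable_apply,
    fun X i j hij k hki hkj => hA.apply_update_update X hij hki hkj, ?_⟩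
  rintro ⟨Z, hZ⟩ hRF
  exact hA.not_ae_apply_single_le_essSup (i₁ := ⟨1, by omega⟩) (by simp [Fin.ext_iff]) hZ
    (hRF _ _)
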